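/- arXiv:2502.08565 — 2 statements merged into one kernel-verified Lean document; each statement's English description precedes it below -/
import Mathlib

section
/- In a single round-robin group of 4 teams with the 3-1-0 point system, any team finishing with at least 7 points is guaranteed to be ranked in the top two positions by points, i.e., at most one other team can have a strictly higher point total. -/
/-! A team can collect at most 3 points from each of the two matches other than the one
against a given opponent, so 7 points force at least a draw against every opponent. Hence
each rival took at most 1 point from its match with that team and has at most 1 + 3 + 3 = 7
points: nobody finishes strictly above it. -/

def ValidScore (score : Fin 4 → Fin 4 → ℕ) : Prop :=
  ∀ i j, i ≠ j → (score i j, score j i) ∈ ({(3, 0), (0, 3), (1, 1)} : Set (ℕ × ℕ))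

def points (score : Fin 4 → Fin 4 → ℕ) (i : Fin 4) : ℕ :=
  ∑ j ∈ Finset.univ.erase i, score i j

namespace ValidScore

variable {score : Fin 4 → Fin 4 → ℕ}

theorem match_outcome (hvalid : ValidScore score) {a b : Fin 4} (hab : a ≠ b) :
    (score a b = 3 ∧ score b a = 0) ∨ (score a b = 0 ∧ score b a = 3) ∨
      (score a b = 1 ∧ score b a = 1) := by
  simpa [Prod.ext_iff] using hvalid a b hab

theorem score_le_three (hvalid : ValidScore score) {a b : Fin 4} (hab : a ≠ b) :
    score a b ≤ 3 := by
  rcases hvalid.match_outcome hab with h | h | h <;> omega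

theorem score_le_one_of_pos (hvalid : ValidScore score) {a b : Fin 4} (hab : a ≠ b)
    (hpos : 0 < score b a) : score a b ≤ 1 := by
  rcases hvalid.match_outcome hab with h | h | h <;> omega

theorem points_le_score_add_six (hvalid : ValidScore score) {a b : Fin 4} (hba : b ≠ a) :
    points score b ≤ score b a + 6 := by
  have ha : a ∈ Finset.univ.erase b := Finset.mem_erase.mpr ⟨hba.symm, Finset.mem_univ a⟩
  have hcard : ((Finset.univ.erase b).erase a).card = 2 := by
    rw [Finset.card_erase_of_mem ha, Finset.card_erase_of_mem (Finset.mem_univ b)]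
    rfl
  have hrest : ∑ j ∈ (Finset.univ.erase b).erase a, score b j ≤ 2 * 3 := by
    rw [← hcard]
    refine Finset.sum_le_card_nsmul _ _ 3 fun j hj => hvalid.score_le_three ?_
    exact (Finset.ne_of_mem_erase (Finset.mem_of_mem_erase hj)).symm
  rw [points, ← Finset.add_sum_erase _ _ ha]
  omega

theorem score_pos_of_seven_le_points (hvalid : ValidScore score) {i k : Fin 4}
    (h : 7 ≤ points score i) (hki : k ≠ i) : 0 < score i k := by
  have := hvalid.points_le_score_add_six hki.symm
  omega

theorem points_le_of_seven_le_points (hvalid : ValidScore score) {i : Fin 4}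
    (h : 7 ≤ points score i) (j : Fin 4) : points score j ≤ points score i := by
  rcases eq_or_ne j i with rfl | hji
  · rfl
  have hbound := hvalid.points_le_score_add_six hji
  have hji_le := hvalid.score_le_one_of_pos hji (hvalid.score_pos_of_seven_le_points h hji)
  omega

end ValidScore

/-- Any team with at least 7 points finishes in the top two: at most one other
team has strictly more points. -/
theorem seven_points_top_two (score : Fin 4 → Fin 4 → ℕ)
    (hvalid : ValidScore score) (i : Fin 4) (h : 7 ≤ points score i) :
    (Finset.univ.filter (fun j => points score i < points score j)).card ≤ 1 := by
  have hempty : Finset.univ.filter (fun j => points score i < points score j) = ∅ :=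
    Finset.filter_eq_empty_iff.mpr fun j _ =>
      (hvalid.points_le_of_seven_le_points h j).not_gt
  simp [hempty]
end

section
/- In a single round-robin group of 4 teams with the 3-1-0 point system, after each team has played exactly one match, no team can be guaranteed a top-two finish nor guaranteed to finish outside the top two: for any first-round results, every team still has some completion of the remaining matches placing it in the top two by points, and some completion placing it outside the top two. -/
/-- Team `i` finishes in the top two by points: at most one other team has
strictly more points. -/
def TopTwo (score : Fin 4 → Fin 4 → ℕ) (i : Fin 4) : Prop :=
  (Finset.univ.filter (fun j => points score i < points score j)).card ≤ 1

open Function Finset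

def matchPoints (x y : ℕ) : ℕ := if y < x then 3 else if x < y then 0 else 1

lemma matchPoints_pair_mem (x y : ℕ) :
    (matchPoints x y, matchPoints y x) ∈ ({(3, 0), (0, 3), (1, 1)} : Set (ℕ × ℕ)) := by
  rcases lt_trichotomy x y with h | rfl | h
  · simp [matchPoints, h, h.not_gt]
  · simp [matchPoints]
  · simp [matchPoints, h, h.not_gt]

lemma matchPoints_of_lt {x y : ℕ} (h : y < x) : matchPoints x y = 3 := if_pos h

lemma matchPoints_of_gt {x y : ℕ} (h : x < y) : matchPoints x y = 0 := by
  simp [matchPoints, h, h.not_gt]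

lemma matchPoints_le_one_of_le {x y : ℕ} (h : x ≤ y) : matchPoints x y ≤ 1 := by
  unfold matchPoints
  split_ifs <;> omega

def completion {α : Type*} [DecidableEq α] (p : α → α) (r1 : α → α → ℕ) (strength : α → ℕ)
    (i j : α) : ℕ :=
  if j = p i then r1 i j else matchPoints (strength i) (strength j)

section completion

variable {p : Fin 4 → Fin 4} {r1 : Fin 4 → Fin 4 → ℕ} (strength : Fin 4 → ℕ)

lemma completion_apply_pair (i : Fin 4) : completion p r1 strength i (p i) = r1 i (p i) :=
  if_pos rfl

lemma validScore_completion (hinv : Involutive p)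
    (hr1 : ∀ i, (r1 i (p i), r1 (p i) i) ∈ ({(3, 0), (0, 3), (1, 1)} : Set (ℕ × ℕ))) :
    ValidScore (completion p r1 strength) := by
  intro i j _
  by_cases hj : j = p i
  · subst hj
    simpa [completion, hinv i] using hr1 i
  · have hi : i ≠ p j := fun hi => hj (by rw [hi, hinv])
    simpa [completion, hj, hi] using matchPoints_pair_mem (strength i) (strength j)

lemma points_completion {i : Fin 4} (hi : p i ≠ i) :
    points (completion p r1 strength) i =
      r1 i (p i) + ∑ j ∈ (univ.erase i).erase (p i), matchPoints (strength i) (strength j) := by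
  rw [points, ← add_sum_erase _ _ (mem_erase.mpr ⟨hi, mem_univ _⟩), completion_apply_pair]
  exact congrArg _ <| sum_congr rfl fun j hj => if_neg (ne_of_mem_erase hj)

lemma card_later_opponents {i : Fin 4} (hi : p i ≠ i) :
    ((univ.erase i).erase (p i)).card = 2 := by
  rw [card_erase_of_mem (mem_erase.mpr ⟨hi, mem_univ _⟩), card_erase_of_mem (mem_univ _)]
  simp

lemma points_completion_of_forall_lt {i : Fin 4} (hi : p i ≠ i)
    (h : ∀ j, j ≠ i → j ≠ p i → strength j < strength i) :
    points (completion p r1 strength) i = r1 i (p i) + 6 := by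
  rw [points_completion strength hi, sum_congr rfl fun j hj => matchPoints_of_lt (h j
    (ne_of_mem_erase (mem_of_mem_erase hj)) (ne_of_mem_erase hj)), sum_const,
    card_later_opponents hi, smul_eq_mul]

lemma points_completion_of_forall_gt {i : Fin 4} (hi : p i ≠ i)
    (h : ∀ j, j ≠ i → j ≠ p i → strength i < strength j) :
    points (completion p r1 strength) i = r1 i (p i) := by
  rw [points_completion strength hi, sum_eq_zero fun j hj => matchPoints_of_gt (h j
    (ne_of_mem_erase (mem_of_mem_erase hj)) (ne_of_mem_erase hj)), add_zero]

lemma points_completion_le_of_forall_le {i : Fin 4} (hi : p i ≠ i)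
    (h : ∀ j, j ≠ i → j ≠ p i → strength i ≤ strength j) :
    points (completion p r1 strength) i ≤ r1 i (p i) + 2 := by
  rw [points_completion strength hi]
  gcongr
  calc ∑ j ∈ (univ.erase i).erase (p i), matchPoints (strength i) (strength j)
      ≤ ((univ.erase i).erase (p i)).card • 1 := sum_le_card_nsmul _ _ 1 fun j hj =>
        matchPoints_le_one_of_le (h j (ne_of_mem_erase (mem_of_mem_erase hj)) (ne_of_mem_erase hj))
    _ = 2 := by rw [card_later_opponents hi, smul_eq_mul, mul_one]

end completion

lemma exists_complementary_pair {p : Fin 4 → Fin 4} (hinv : Involutive p) (hnf : ∀ i, p i ≠ i)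
    (t : Fin 4) : ∃ a, a ≠ t ∧ a ≠ p t ∧ p a ≠ t ∧ p a ≠ p t ∧
      ∀ j, j ≠ a → j ≠ p a → j = t ∨ j = p t := by
  obtain ⟨a, hat, haq⟩ : ∃ a : Fin 4, a ≠ t ∧ a ≠ p t := by
    have : ∀ x y : Fin 4, ∃ a, a ≠ x ∧ a ≠ y := by decide
    exact this t (p t)
  have hbt : p a ≠ t := fun h => haq (by rw [← h, hinv])
  have hbq : p a ≠ p t := fun h => hat (hinv.injective h)
  have huniv : ({t, p t, a, p a} : Finset (Fin 4)) = univ := by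
    refine eq_univ_of_card _ ?_
    rw [card_insert_of_notMem, card_insert_of_notMem, card_pair (hnf a).symm]
    all_goals simp_all [(hnf _).symm, eq_comm]
  refine ⟨a, hat, haq, hbt, hbq, fun j hja hjb => ?_⟩
  have hj : j ∈ ({t, p t, a, p a} : Finset (Fin 4)) := huniv ▸ mem_univ j
  simpa [hja, hjb] using hj

lemma topTwo_of_forall_points_le {score : Fin 4 → Fin 4 → ℕ} {i : Fin 4}
    (h : ∀ j, points score j ≤ points score i) : TopTwo score i := by
  simp [TopTwo, filter_eq_empty_iff.mpr fun j _ => (h j).not_gt]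

lemma not_topTwo_of_lt {score : Fin 4 → Fin 4 → ℕ} {i a b : Fin 4} (hab : a ≠ b)
    (ha : points score i < points score a) (hb : points score i < points score b) :
    ¬TopTwo score i := by
  have hsub : {a, b} ⊆ univ.filter (fun j => points score i < points score j) := by
    simp [insert_subset_iff, ha, hb]
  have := card_le_card hsub
  rw [card_pair hab] at this
  unfold TopTwo
  omega

lemma fst_le_three_of_mem {x y : ℕ} (h : (x, y) ∈ ({(3, 0), (0, 3), (1, 1)} : Set (ℕ × ℕ))) :
    x ≤ 3 := by
  simp only [Set.mem_insert_iff, Set.mem_singleton_iff, Prod.mk.injEq] at h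
  omega

lemma exists_completion_topTwo {p : Fin 4 → Fin 4} (hinv : Involutive p) (hnf : ∀ i, p i ≠ i)
    {r1 : Fin 4 → Fin 4 → ℕ}
    (hr1 : ∀ i, (r1 i (p i), r1 (p i) i) ∈ ({(3, 0), (0, 3), (1, 1)} : Set (ℕ × ℕ)))
    (t : Fin 4) :
    ∃ score : Fin 4 → Fin 4 → ℕ, ValidScore score ∧
      (∀ i, score i (p i) = r1 i (p i)) ∧ TopTwo score t := by
  set strength : Fin 4 → ℕ := fun j => if j = t then 1 else 0
  refine ⟨completion p r1 strength, validScore_completion strength hinv hr1,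
    completion_apply_pair strength, topTwo_of_forall_points_le fun j => ?_⟩
  have ht : points (completion p r1 strength) t = r1 t (p t) + 6 :=
    points_completion_of_forall_lt strength (hnf t) fun j hj _ => by simp [strength, hj]
  rcases eq_or_ne j t with rfl | hj
  · exact le_rfl
  have := points_completion_le_of_forall_le strength (hnf j) (r1 := r1) fun k _ _ => by
    simp [strength, hj]
  have := fst_le_three_of_mem (hr1 j)
  omega

lemma exists_completion_not_topTwo {p : Fin 4 → Fin 4} (hinv : Involutive p) (hnf : ∀ i, p i ≠ i)
    {r1 : Fin 4 → Fin 4 → ℕ}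
    (hr1 : ∀ i, (r1 i (p i), r1 (p i) i) ∈ ({(3, 0), (0, 3), (1, 1)} : Set (ℕ × ℕ)))
    (t : Fin 4) :
    ∃ score : Fin 4 → Fin 4 → ℕ, ValidScore score ∧
      (∀ i, score i (p i) = r1 i (p i)) ∧ ¬TopTwo score t := by
  obtain ⟨a, hat, haq, hbt, hbq, hrest⟩ := exists_complementary_pair hinv hnf t
  set strength : Fin 4 → ℕ := fun j => if j = t ∨ j = p t then 0 else 1
  refine ⟨completion p r1 strength, validScore_completion strength hinv hr1,
    completion_apply_pair strength, ?_⟩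
  have ht : points (completion p r1 strength) t = r1 t (p t) :=
    points_completion_of_forall_gt strength (hnf t) fun j hjt hjq => by simp [strength, hjt, hjq]
  have hpair : ∀ b, b ≠ t → b ≠ p t → (∀ j, j ≠ b → j ≠ p b → j = t ∨ j = p t) →
      points (completion p r1 strength) b = r1 b (p b) + 6 := fun b hbt hbq hb =>
    points_completion_of_forall_lt strength (hnf b) fun j hjb hjpb => by
      simp [strength, hbt, hbq, hb j hjb hjpb]
  have ha := hpair a hat haq hrest
  have hb := hpair (p a) hbt hbq (by rw [hinv a]; exact fun j h1 h2 => hrest j h2 h1)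
  have := fst_le_three_of_mem (hr1 t)
  exact not_topTwo_of_lt (hnf a).symm (by omega) (by omega)

/-- After the first round (given by a fixed-point-free involutive pairing `p`
and any valid first-round results `r1`), no team is guaranteed a top-two finish
nor guaranteed to finish outside the top two: every team admits a valid
completion of the tournament placing it in the top two, and another valid
completion placing it outside the top two. -/
theorem first_round_decides_nothing (p : Fin 4 → Fin 4)
    (hinv : Function.Involutive p) (hnf : ∀ i, p i ≠ i)
    (r1 : Fin 4 → Fin 4 → ℕ)
    (hr1 : ∀ i, (r1 i (p i), r1 (p i) i) ∈ ({(3, 0), (0, 3), (1, 1)} : Set (ℕ × ℕ)))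
    (t : Fin 4) :
    (∃ score : Fin 4 → Fin 4 → ℕ, ValidScore score ∧
      (∀ i, score i (p i) = r1 i (p i)) ∧ TopTwo score t) ∧
    (∃ score : Fin 4 → Fin 4 → ℕ, ValidScore score ∧
      (∀ i, score i (p i) = r1 i (p i)) ∧ ¬TopTwo score t) :=
  ⟨exists_completion_topTwo hinv hnf hr1 t, exists_completion_not_topTwo hinv hnf hr1 t⟩
end
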